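/- There exists a constant c_G > 0 such that for every C > c_G the integral ∫_G exp(−C·d(g)) dμ(g) is finite. -/

import Mathlib

open MeasureTheory Metric
open scoped Pointwise ENNReal NNReal

/-!
Let `S` be the closed unit ball around `1` and cover the compact set `S * S` by `N` left translates
of `S`. Then `μ (S ^ (m + 1)) ≤ N ^ m * μ S`, and since the metric is a left-invariant coarse
length metric, the ball of radius `r` lies in `S ^ (⌈r⌉ + 2)`. Balls thus have at most exponential
volume growth `μ (closedBall 1 r) ≲ N ^ r`, and `exp (-C * d g)` is integrable as soon as
`exp C > N`, by comparison with a geometric series.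
-/

theorem pow_add_two_subset_iUnion_preimage_mul {G : Type*} [Group G] {A : Set G} {t : Finset G}
    (hA : A * A ⊆ ⋃ g ∈ t, (g * ·) ⁻¹' A) (m : ℕ) :
    A ^ (m + 2) ⊆ ⋃ g ∈ t, (g * ·) ⁻¹' (A ^ (m + 1)) := by
  rw [add_comm, pow_add, sq]
  rintro _ ⟨ab, hab, c, hc, rfl⟩
  obtain ⟨g, hg, hgab⟩ := Set.mem_iUnion₂.1 (hA hab)
  refine Set.mem_iUnion₂.2 ⟨g, hg, ?_⟩
  rw [Set.mem_preimage, ← mul_assoc, pow_succ']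
  exact Set.mul_mem_mul hgab hc

theorem measure_pow_succ_le {G : Type*} [Group G] [MeasurableSpace G] [MeasurableMul G]
    (μ : Measure G) [μ.IsMulLeftInvariant] {A : Set G} {t : Finset G}
    (hA : A * A ⊆ ⋃ g ∈ t, (g * ·) ⁻¹' A) (m : ℕ) :
    μ (A ^ (m + 1)) ≤ (t.card : ℝ≥0∞) ^ m * μ A := by
  induction m with
  | zero => simp
  | succ m ih =>
    calc μ (A ^ (m + 2)) ≤ ∑ g ∈ t, μ ((g * ·) ⁻¹' (A ^ (m + 1))) :=
          (measure_mono (pow_add_two_subset_iUnion_preimage_mul hA m)).trans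
            (measure_biUnion_finset_le t _)
      _ = t.card * μ (A ^ (m + 1)) := by
          simp only [measure_preimage_mul, Finset.sum_const, nsmul_eq_mul]
      _ ≤ t.card ^ (m + 1) * μ A := by
          rw [pow_succ' (t.card : ℝ≥0∞), mul_assoc]
          gcongr

section LeftInvariantMetric

variable {G : Type*} [Group G] [PseudoMetricSpace G]

theorem inv_mul_mem_closedBall_one_iff (hinv : ∀ g x y : G, dist (g * x) (g * y) = dist x y)
    {x y : G} {ε : ℝ} : x⁻¹ * y ∈ closedBall (1 : G) ε ↔ dist x y ≤ ε := by
  rw [mem_closedBall, ← hinv x, mul_inv_cancel_left, mul_one, dist_comm]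

theorem mem_closedBall_one_pow_of_chain (hinv : ∀ g x y : G, dist (g * x) (g * y) = dist x y)
    {ε : ℝ} {m : ℕ} {z : ℕ → G} (hz₀ : z 0 = 1)
    (hstep : ∀ i < m, dist (z i) (z (i + 1)) ≤ ε) : ∀ k ≤ m, z k ∈ closedBall (1 : G) ε ^ k := by
  intro k hk
  induction k with
  | zero => simp [hz₀]
  | succ k ih =>
    rw [← mul_inv_cancel_left (z k) (z (k + 1)), pow_succ]
    exact Set.mul_mem_mul (ih (by omega))
      ((inv_mul_mem_closedBall_one_iff hinv).2 (hstep k (by omega)))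

theorem closedBall_one_subset_pow_of_chain (hinv : ∀ g x y : G, dist (g * x) (g * y) = dist x y)
    {ε : ℝ} (hε : 0 ≤ ε)
    (hchain : ∀ y : G, ∃ (m : ℕ) (z : ℕ → G), z 0 = 1 ∧ z m = y ∧
      (∀ i < m, dist (z i) (z (i + 1)) ≤ ε) ∧ (m : ℝ) ≤ dist 1 y / ε + 2)
    (r : ℝ) : closedBall (1 : G) r ⊆ closedBall (1 : G) ε ^ (⌈r / ε⌉₊ + 2) := by
  intro y hy
  obtain ⟨m, z, hz₀, rfl, hstep, hm⟩ := hchain y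
  have hm' : m ≤ ⌈r / ε⌉₊ + 2 := by
    have : dist 1 (z m) / ε ≤ ⌈r / ε⌉₊ :=
      (div_le_div_of_nonneg_right (by rwa [dist_comm, ← mem_closedBall]) hε).trans (Nat.le_ceil _)
    have : (m : ℝ) ≤ ⌈r / ε⌉₊ + 2 := by linarith
    exact_mod_cast this
  exact Set.pow_subset_pow_right (mem_closedBall_self hε) hm'
    (mem_closedBall_one_pow_of_chain hinv hz₀ hstep m le_rfl)

end LeftInvariantMetric

theorem integrable_exp_neg_mul_dist_of_measure_closedBall_le {X : Type*} [PseudoMetricSpace X]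
    [MeasurableSpace X] [OpensMeasurableSpace X] {μ : Measure X} {x₀ : X} {K : ℝ≥0∞} {R : ℝ≥0}
    {C : ℝ} (hK : K ≠ ∞) (hC : 0 ≤ C) (hR : (R : ℝ) < Real.exp C)
    (hball : ∀ n : ℕ, μ (closedBall x₀ (n + 1)) ≤ K * R ^ n) :
    Integrable (fun x => Real.exp (-(C * dist x x₀))) μ := by
  set ρ : ℝ≥0∞ := ENNReal.ofReal (Real.exp (-C))
  have hρR : ρ * R < 1 := by
    rw [← ENNReal.ofReal_coe_nnreal, ← ENNReal.ofReal_mul (Real.exp_pos _).le,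
      ENNReal.ofReal_lt_one, Real.exp_neg, inv_mul_lt_iff₀ (Real.exp_pos _), mul_one]
    exact hR
  have hpt : ∀ x, ENNReal.ofReal (Real.exp (-(C * dist x x₀)))
      ≤ ∑' n : ℕ, (closedBall x₀ (n + 1)).indicator (fun _ => ρ ^ n) x := by
    intro x
    set n := ⌊dist x x₀⌋₊
    have hx : x ∈ closedBall x₀ (n + 1) := mem_closedBall.2 (Nat.lt_floor_add_one _).le
    refine le_trans ?_ (ENNReal.le_tsum n)
    rw [Set.indicator_of_mem hx, ← ENNReal.ofReal_pow (Real.exp_pos _).le, ← Real.exp_nat_mul]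
    gcongr
    nlinarith [Nat.floor_le (dist_nonneg (x := x) (y := x₀))]
  refine ⟨(by fun_prop : Continuous _).aestronglyMeasurable, ?_⟩
  rw [hasFiniteIntegral_iff_ofReal (.of_forall fun _ => (Real.exp_pos _).le)]
  calc ∫⁻ x, ENNReal.ofReal (Real.exp (-(C * dist x x₀))) ∂μ
      ≤ ∫⁻ x, ∑' n : ℕ, (closedBall x₀ (n + 1)).indicator (fun _ => ρ ^ n) x ∂μ :=
        lintegral_mono hpt
    _ = ∑' n : ℕ, ρ ^ n * μ (closedBall x₀ (n + 1)) := by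
        rw [lintegral_tsum fun n => (measurable_const.indicator measurableSet_closedBall).aemeasurable]
        simp_rw [lintegral_indicator_const measurableSet_closedBall]
    _ ≤ ∑' n : ℕ, (ρ * R) ^ n * K := by
        refine ENNReal.tsum_le_tsum fun n => ?_
        rw [mul_pow, mul_assoc, mul_comm _ K]
        gcongr
        exact hball n
    _ < ∞ := by
        rw [ENNReal.tsum_mul_right, ENNReal.tsum_geometric]
        exact ENNReal.mul_lt_top (ENNReal.inv_lt_top.2 (tsub_pos_of_lt hρR)) hK.lt_top

/-- There exists a constant `c_G > 0` such that for every `C > c_G` the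
integral `∫_G exp (-C * d g) dμ(g)` is finite. -/
theorem exp_neg_dist_integrable {G : Type*} [Group G] [MetricSpace G]
    [IsTopologicalGroup G] [ProperSpace G]
    [MeasurableSpace G] [BorelSpace G]
    (hinv : ∀ g x y : G, dist (g * x) (g * y) = dist x y)
    (hcoarse : ∀ x y : G, ∀ ε > (0 : ℝ), ∃ (m : ℕ) (z : ℕ → G),
      z 0 = x ∧ z m = y ∧ (∀ i < m, dist (z i) (z (i + 1)) ≤ ε) ∧
      (m : ℝ) ≤ dist x y / ε + 2)
    (μ : Measure G) [μ.IsHaarMeasure] :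
    ∃ c_G > (0 : ℝ), ∀ C : ℝ, C > c_G →
      Integrable (fun g : G => Real.exp (-(C * dist g 1))) μ := by
  set S := closedBall (1 : G) 1
  have hS : IsCompact S := isCompact_closedBall _ _
  obtain ⟨t, ht⟩ := compact_covered_by_mul_left_translates (hS.mul hS)
    ⟨1, mem_interior_iff_mem_nhds.2 (closedBall_mem_nhds 1 one_pos)⟩
  have hball (n : ℕ) : μ (closedBall 1 (n + 1)) ≤ t.card ^ 2 * μ S * (t.card : ℝ≥0) ^ n := by
    have hsub := closedBall_one_subset_pow_of_chain hinv zero_le_one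
      (fun y => hcoarse 1 y 1 one_pos) (n + 1)
    rw [div_one, ← Nat.cast_add_one, Nat.ceil_natCast] at hsub
    calc μ (closedBall 1 (n + 1)) ≤ t.card ^ (n + 2) * μ S :=
          (measure_mono (by exact_mod_cast hsub)).trans (measure_pow_succ_le μ ht (n + 2))
      _ = t.card ^ 2 * μ S * (t.card : ℝ≥0) ^ n := by push_cast; ring
  refine ⟨Real.log t.card + 1, by positivity, fun C hC => ?_⟩
  have hlog : 0 ≤ Real.log t.card := Real.log_natCast_nonneg _
  refine integrable_exp_neg_mul_dist_of_measure_closedBall_le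
    (by finiteness [hS.measure_lt_top (μ := μ) |>.ne]) (by linarith) ?_ hball
  calc ((t.card : ℝ≥0) : ℝ) ≤ Real.exp (Real.log t.card) := by simpa using Real.le_exp_log _
    _ < Real.exp C := Real.exp_lt_exp.2 (by linarith)
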